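/- arXiv:1910.11291 — 2 statements merged into one kernel-verified Lean document; each statement's English description precedes it below -/
import Mathlib

section
/- (Representation of the COLP estimator, equation (est2)) Suppose Y = X_C β_C + X_D β_D + ε with X_C ∈ ℝ^{n×t_c} of full column rank, X_D ∈ ℝ^{n×p_d}, and let Q_C ∈ ℝ^{n×n_d} (n_d = n − t_c) have orthonormal columns spanning the orthogonal complement of the column space of X_C. Set M_C = I_n − X_C(X_CᵀX_C)⁻¹X_Cᵀ and W = X_DᵀQ_C, and assume WᵀW is invertible. Then the Moore–Penrose inverse of M_C X_D equals W(WᵀW)⁻¹Q_Cᵀ, and the COLP estimator β̂_D = (M_C X_D)⁺Y satisfies β̂_D = H_W H_Wᵀ β_D + W(WᵀW)⁻¹Q_Cᵀ ε, where H_W = W(WᵀW)^{−1/2}; in particular β̂_D does not depend on β_C. -/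
open MeasureTheory ProbabilityTheory Matrix Filter Asymptotics

noncomputable section

/-- The four Penrose conditions for `B` to be the Moore–Penrose inverse of `A`. -/
def IsMoorePenrose {m n : Type*} [Fintype m] [Fintype n]
    (A : Matrix m n ℝ) (B : Matrix n m ℝ) : Prop :=
  A * B * A = A ∧ B * A * B = B ∧ (A * B)ᵀ = A * B ∧ (B * A)ᵀ = B * A

/-- Smallest (real) eigenvalue of a square matrix. -/
def lambdaMin {k : Type*} [Fintype k] (A : Matrix k k ℝ) : ℝ :=
  sInf {r : ℝ | ∃ v : k → ℝ, v ≠ 0 ∧ A.mulVec v = r • v}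

/-- Largest (real) eigenvalue of a square matrix. -/
def lambdaMax {k : Type*} [Fintype k] (A : Matrix k k ℝ) : ℝ :=
  sSup {r : ℝ | ∃ v : k → ℝ, v ≠ 0 ∧ A.mulVec v = r • v}

/-- Condition number `λ_max / λ_min`. -/
def condNum {k : Type*} [Fintype k] (A : Matrix k k ℝ) : ℝ := lambdaMax A / lambdaMin A

/-- Indices of the conditioning set `C = {1, …, t_c}`. -/
abbrev Cset (p tc : ℕ) := {j : Fin p // (j : ℕ) < tc}

/-- Indices of the remaining set `D = {1, …, p} \ C`. -/
abbrev Dset (p tc : ℕ) := {j : Fin p // tc ≤ (j : ℕ)}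

/-- Column submatrix corresponding to the conditioning set `C`. -/
def colsC {n p : ℕ} (tc : ℕ) (X : Matrix (Fin n) (Fin p) ℝ) : Matrix (Fin n) (Cset p tc) ℝ :=
  fun i j => X i j.1

/-- Column submatrix corresponding to the remaining set `D`. -/
def colsD {n p : ℕ} (tc : ℕ) (X : Matrix (Fin n) (Fin p) ℝ) : Matrix (Fin n) (Dset p tc) ℝ :=
  fun i j => X i j.1

/-- Block `Σ₁₁` of a covariance matrix. -/
def block11 {p : ℕ} (tc : ℕ) (S : Matrix (Fin p) (Fin p) ℝ) : Matrix (Cset p tc) (Cset p tc) ℝ :=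
  fun i j => S i.1 j.1

/-- Block `Σ₁₂`. -/
def block12 {p : ℕ} (tc : ℕ) (S : Matrix (Fin p) (Fin p) ℝ) : Matrix (Cset p tc) (Dset p tc) ℝ :=
  fun i j => S i.1 j.1

/-- Block `Σ₂₁`. -/
def block21 {p : ℕ} (tc : ℕ) (S : Matrix (Fin p) (Fin p) ℝ) : Matrix (Dset p tc) (Cset p tc) ℝ :=
  fun i j => S i.1 j.1

/-- Block `Σ₂₂`. -/
def block22 {p : ℕ} (tc : ℕ) (S : Matrix (Fin p) (Fin p) ℝ) : Matrix (Dset p tc) (Dset p tc) ℝ :=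
  fun i j => S i.1 j.1

/-- Schur complement `Σ₂₂·₂ = Σ₂₂ − Σ₂₁ Σ₁₁⁻¹ Σ₁₂`. -/
def schurCompl {p : ℕ} (tc : ℕ) (S : Matrix (Fin p) (Fin p) ℝ) :
    Matrix (Dset p tc) (Dset p tc) ℝ :=
  block22 tc S - block21 tc S * (block11 tc S)⁻¹ * block12 tc S

/-- Orthogonal projection `M_C = I − X_C (X_Cᵀ X_C)⁻¹ X_Cᵀ`. -/
def projC {n p : ℕ} (tc : ℕ) (X : Matrix (Fin n) (Fin p) ℝ) : Matrix (Fin n) (Fin n) ℝ :=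
  1 - colsC tc X * ((colsC tc X)ᵀ * colsC tc X)⁻¹ * (colsC tc X)ᵀ

/-- A measure on `ℝ` is centered sub-Gaussian with variance `σ²`. -/
def IsCenteredSubGaussian (ν : Measure ℝ) (σ : ℝ) : Prop :=
  (∫ x, x ∂ν) = 0 ∧ (∫ x, x ^ 2 ∂ν) = σ ^ 2 ∧
    ∃ K > 0, ∀ t : ℝ, (∫ x, Real.exp (t * x) ∂ν) ≤ Real.exp (K * t ^ 2)

/-- Euclidean norm of a vector. -/
def vnorm {k : Type*} [Fintype k] (v : k → ℝ) : ℝ := Real.sqrt (v ⬝ᵥ v)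




lemma colp_mp_aux {n m p : ℕ} (Q : Matrix (Fin n) (Fin m) ℝ) (W : Matrix (Fin p) (Fin m) ℝ)
    (hQorth : Qᵀ * Q = 1) (hW : IsUnit ((Wᵀ * W)).det) :
    IsMoorePenrose (Q * Wᵀ) (W * (Wᵀ * W)⁻¹ * Qᵀ) := by
  have hS : (Wᵀ * W) * (Wᵀ * W)⁻¹ = 1 := Matrix.mul_nonsing_inv _ hW
  have hS' : (Wᵀ * W)⁻¹ * (Wᵀ * W) = 1 := Matrix.nonsing_inv_mul _ hW
  have hSsymm : ((Wᵀ * W)⁻¹)ᵀ = (Wᵀ * W)⁻¹ := by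
    rw [Matrix.transpose_nonsing_inv, Matrix.transpose_mul, Matrix.transpose_transpose]
  refine ⟨?_, ?_, ?_, ?_⟩
  · calc Q * Wᵀ * (W * (Wᵀ * W)⁻¹ * Qᵀ) * (Q * Wᵀ)
        = Q * (Wᵀ * (W * ((Wᵀ * W)⁻¹ * (Qᵀ * (Q * Wᵀ))))) := by simp only [Matrix.mul_assoc]
      _ = Q * ((Wᵀ * W) * (Wᵀ * W)⁻¹ * ((Qᵀ * Q) * Wᵀ)) := by simp only [Matrix.mul_assoc]
      _ = Q * Wᵀ := by rw [hS, hQorth, Matrix.one_mul, Matrix.one_mul]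
  · calc W * (Wᵀ * W)⁻¹ * Qᵀ * (Q * Wᵀ) * (W * (Wᵀ * W)⁻¹ * Qᵀ)
        = W * ((Wᵀ * W)⁻¹ * ((Qᵀ * Q) * ((Wᵀ * W) * ((Wᵀ * W)⁻¹ * Qᵀ)))) := by
          simp only [Matrix.mul_assoc]
      _ = W * ((Wᵀ * W)⁻¹ * ((Wᵀ * W) * ((Wᵀ * W)⁻¹ * Qᵀ))) := by
          rw [hQorth, Matrix.one_mul]
      _ = W * (((Wᵀ * W)⁻¹ * (Wᵀ * W)) * ((Wᵀ * W)⁻¹ * Qᵀ)) := by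
          simp only [Matrix.mul_assoc]
      _ = W * (Wᵀ * W)⁻¹ * Qᵀ := by rw [hS', Matrix.one_mul, Matrix.mul_assoc]
  · have h3 : Q * Wᵀ * (W * (Wᵀ * W)⁻¹ * Qᵀ) = Q * Qᵀ := by
      calc Q * Wᵀ * (W * (Wᵀ * W)⁻¹ * Qᵀ)
          = Q * ((Wᵀ * W) * (Wᵀ * W)⁻¹ * Qᵀ) := by simp only [Matrix.mul_assoc]
        _ = Q * Qᵀ := by rw [hS, Matrix.one_mul]
    rw [h3, Matrix.transpose_mul, Matrix.transpose_transpose]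
  · have h4 : W * (Wᵀ * W)⁻¹ * Qᵀ * (Q * Wᵀ) = W * (Wᵀ * W)⁻¹ * Wᵀ := by
      calc W * (Wᵀ * W)⁻¹ * Qᵀ * (Q * Wᵀ)
          = W * ((Wᵀ * W)⁻¹ * ((Qᵀ * Q) * Wᵀ)) := by simp only [Matrix.mul_assoc]
        _ = W * (Wᵀ * W)⁻¹ * Wᵀ := by rw [hQorth, Matrix.one_mul, Matrix.mul_assoc]
    rw [h4, Matrix.transpose_mul, Matrix.transpose_mul, hSsymm, Matrix.transpose_transpose,
      Matrix.mul_assoc]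

/-- **Representation of the COLP estimator (equation (est2)).** -/
theorem colp_estimator_representation {n tc pd : ℕ}
    (XC : Matrix (Fin n) (Fin tc) ℝ) (XD : Matrix (Fin n) (Fin pd) ℝ)
    (βC : Fin tc → ℝ) (βD : Fin pd → ℝ) (ε : Fin n → ℝ)
    (hXC : IsUnit (XCᵀ * XC).det)
    (Q : Matrix (Fin n) (Fin (n - tc)) ℝ) (hQorth : Qᵀ * Q = 1)
    -- the columns of Q span the orthogonal complement of the column space of X_C,
    -- i.e. M_C = Q Qᵀ for the projection M_C = I − X_C (X_Cᵀ X_C)⁻¹ X_Cᵀ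
    (hQspan : (1 : Matrix (Fin n) (Fin n) ℝ) - XC * (XCᵀ * XC)⁻¹ * XCᵀ = Q * Qᵀ)
    (hW : IsUnit ((XDᵀ * Q)ᵀ * (XDᵀ * Q)).det)
    -- G = (Wᵀ W)^{-1/2}, the positive semidefinite inverse square root of Wᵀ W
    (G : Matrix (Fin (n - tc)) (Fin (n - tc)) ℝ) (hGpsd : G.PosSemidef)
    (hG : G * G * ((XDᵀ * Q)ᵀ * (XDᵀ * Q)) = 1) :
    -- the Moore–Penrose inverse of M_C X_D is W (Wᵀ W)⁻¹ Q_Cᵀ, and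
    -- β̂_D = H_W H_Wᵀ β_D + W (Wᵀ W)⁻¹ Q_Cᵀ ε with H_W = W (Wᵀ W)^{−1/2};
    -- in particular β̂_D does not depend on β_C
    IsMoorePenrose (((1 : Matrix (Fin n) (Fin n) ℝ) - XC * (XCᵀ * XC)⁻¹ * XCᵀ) * XD)
        ((XDᵀ * Q) * ((XDᵀ * Q)ᵀ * (XDᵀ * Q))⁻¹ * Qᵀ) ∧
      ((XDᵀ * Q) * ((XDᵀ * Q)ᵀ * (XDᵀ * Q))⁻¹ * Qᵀ).mulVec
          (XC.mulVec βC + XD.mulVec βD + ε)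
        = ((XDᵀ * Q * G) * (XDᵀ * Q * G)ᵀ).mulVec βD
            + ((XDᵀ * Q) * ((XDᵀ * Q)ᵀ * (XDᵀ * Q))⁻¹ * Qᵀ).mulVec ε := by
  have hA : ((1 : Matrix (Fin n) (Fin n) ℝ) - XC * (XCᵀ * XC)⁻¹ * XCᵀ) * XD
      = Q * (XDᵀ * Q)ᵀ := by
    rw [hQspan, Matrix.transpose_mul, Matrix.transpose_transpose, Matrix.mul_assoc]
  have hQXC : Qᵀ * XC = 0 := by
    have h1 : ((1 : Matrix (Fin n) (Fin n) ℝ) - XC * (XCᵀ * XC)⁻¹ * XCᵀ) * XC = 0 := by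
      simp only [Matrix.sub_mul, Matrix.one_mul, Matrix.mul_assoc]
      rw [Matrix.nonsing_inv_mul _ hXC, Matrix.mul_one, sub_self]
    have h2 : Q * (Qᵀ * XC) = 0 := by rw [← Matrix.mul_assoc, ← hQspan, h1]
    calc Qᵀ * XC = (Qᵀ * Q) * (Qᵀ * XC) := by rw [hQorth, Matrix.one_mul]
      _ = Qᵀ * (Q * (Qᵀ * XC)) := by rw [Matrix.mul_assoc]
      _ = 0 := by rw [h2, Matrix.mul_zero]
  have hS : ((XDᵀ * Q)ᵀ * (XDᵀ * Q)) * ((XDᵀ * Q)ᵀ * (XDᵀ * Q))⁻¹ = 1 :=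
    Matrix.mul_nonsing_inv _ hW
  have hGG : G * G = ((XDᵀ * Q)ᵀ * (XDᵀ * Q))⁻¹ := by
    calc G * G
        = (G * G) * (((XDᵀ * Q)ᵀ * (XDᵀ * Q)) * ((XDᵀ * Q)ᵀ * (XDᵀ * Q))⁻¹) := by
          rw [hS, Matrix.mul_one]
      _ = (G * G * ((XDᵀ * Q)ᵀ * (XDᵀ * Q))) * ((XDᵀ * Q)ᵀ * (XDᵀ * Q))⁻¹ := by
          simp only [Matrix.mul_assoc]
      _ = ((XDᵀ * Q)ᵀ * (XDᵀ * Q))⁻¹ := by rw [hG, Matrix.one_mul]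
  have hGsym : Gᵀ = G := hGpsd.1
  constructor
  · rw [hA]; exact colp_mp_aux Q (XDᵀ * Q) hQorth hW
  · have hBXC : ((XDᵀ * Q) * ((XDᵀ * Q)ᵀ * (XDᵀ * Q))⁻¹ * Qᵀ) * XC = 0 := by
      rw [Matrix.mul_assoc, hQXC, Matrix.mul_zero]
    have hQXD : Qᵀ * XD = (XDᵀ * Q)ᵀ := by
      rw [Matrix.transpose_mul, Matrix.transpose_transpose]
    have hBXD : ((XDᵀ * Q) * ((XDᵀ * Q)ᵀ * (XDᵀ * Q))⁻¹ * Qᵀ) * XD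
        = (XDᵀ * Q * G) * (XDᵀ * Q * G)ᵀ := by
      rw [Matrix.mul_assoc, hQXD, ← hGG]
      simp only [Matrix.transpose_mul, Matrix.transpose_transpose, hGsym, Matrix.mul_assoc]
    rw [Matrix.mulVec_add, Matrix.mulVec_add, Matrix.mulVec_mulVec, Matrix.mulVec_mulVec,
      hBXC, hBXD]
    simp
end
end

section
/- (Deterministic sandwich bound from the proof of Lemma diag) Let Σ be a p×p positive definite matrix, let U ∈ ℝ^{p×n} with UᵀU = I_n (n ≤ p), and let v ∈ ℝ^p with ‖v‖ = 1. Set w = Σ^{1/2}v/‖Σ^{1/2}v‖. Then (λ_min(Σ)/λ_max(Σ))·‖Uᵀw‖² ≤ vᵀ Σ^{1/2} U (Uᵀ Σ U)⁻¹ Uᵀ Σ^{1/2} v ≤ (λ_max(Σ)/λ_min(Σ))·‖Uᵀw‖². -/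
open MeasureTheory ProbabilityTheory Matrix Filter Asymptotics

noncomputable section

/-! With `s = Σ^{1/2} v` and `B = Uᵀ Σ U` the quadratic form is `(Uᵀ s)ᵀ B⁻¹ (Uᵀ s)`. Since `U` is
an isometry, the Rayleigh quotients of `B` lie in `[λ_min, λ_max]`, so those of `B⁻¹` lie in
`[λ_max⁻¹, λ_min⁻¹]`. Moreover `‖s‖² = vᵀ Σ v ∈ [λ_min, λ_max]` and `‖Uᵀ w‖² = ‖Uᵀ s‖² / ‖s‖²`,
which converts the bounds `‖Uᵀ s‖² / λ_max ≤ (Uᵀ s)ᵀ B⁻¹ (Uᵀ s) ≤ ‖Uᵀ s‖² / λ_min` into the claim. -/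

namespace Matrix

section Congruence
variable {m n R : Type*} [Fintype m] [Fintype n] [CommSemiring R]

theorem mulVec_dotProduct_mulVec (M : Matrix m n R) (x y : n → R) :
    (M *ᵥ x) ⬝ᵥ (M *ᵥ y) = x ⬝ᵥ (Mᵀ * M) *ᵥ y := by
  rw [dotProduct_mulVec, vecMul_mulVec, ← dotProduct_mulVec]

theorem dotProduct_transpose_mul_mul_mulVec (M : Matrix m n R) (A : Matrix m m R)
    (x : n → R) :
    x ⬝ᵥ (Mᵀ * A * M) *ᵥ x = (M *ᵥ x) ⬝ᵥ A *ᵥ (M *ᵥ x) := by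
  rw [← mulVec_mulVec, ← mulVec_mulVec, dotProduct_mulVec, vecMul_transpose,
    dotProduct_mulVec]

end Congruence

section Spectrum
variable {m n : Type*} [Fintype m] [Fintype n] [DecidableEq m] [DecidableEq n]

theorem setOf_mulVec_eq_smul_eq_spectrum {K : Type*} [Field K] (A : Matrix n n K) :
    {r : K | ∃ v : n → K, v ≠ 0 ∧ A *ᵥ v = r • v} = spectrum K A := by
  ext r
  rw [Set.mem_ofPred_eq, ← spectrum_toLin', ← Module.End.hasEigenvalue_iff_mem_spectrum]
  constructor
  · rintro ⟨v, hv, hAv⟩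
    exact Module.End.hasEigenvalue_of_hasEigenvector
      ⟨Module.End.mem_eigenspace_iff.mpr (by simpa using hAv), hv⟩
  · intro h
    obtain ⟨v, hv⟩ := h.exists_hasEigenvector
    exact ⟨v, hv.2, by simpa using Module.End.mem_eigenspace_iff.mp hv.1⟩

theorem spectrum_subset_Icc_lambdaMin_lambdaMax (A : Matrix n n ℝ) :
    spectrum ℝ A ⊆ Set.Icc (lambdaMin A) (lambdaMax A) := by
  intro r hr
  rw [lambdaMin, lambdaMax, setOf_mulVec_eq_smul_eq_spectrum]
  exact ⟨csInf_le A.finite_spectrum.bddBelow hr, le_csSup A.finite_spectrum.bddAbove hr⟩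

theorem IsHermitian.mul_dotProduct_self_le_dotProduct_mulVec {A : Matrix n n ℝ}
    (hA : A.IsHermitian) {a : ℝ} (ha : ∀ r ∈ spectrum ℝ A, a ≤ r) (x : n → ℝ) :
    a * (x ⬝ᵥ x) ≤ x ⬝ᵥ A *ᵥ x := by
  have hpsd : (A - algebraMap ℝ (Matrix n n ℝ) a).PosSemidef := by
    refine posSemidef_iff_isHermitian_and_spectrum_nonneg.mpr
      ⟨hA.sub (isHermitian_diagonal _), ?_⟩
    rw [← spectrum.sub_singleton_eq]
    rintro _ ⟨r, hr, _, rfl, rfl⟩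
    exact sub_nonneg.mpr (ha r hr)
  simpa [sub_mulVec, Algebra.algebraMap_eq_smul_one, smul_mulVec, sub_nonneg]
    using hpsd.dotProduct_mulVec_nonneg x

theorem IsHermitian.dotProduct_mulVec_le_mul_dotProduct_self {A : Matrix n n ℝ}
    (hA : A.IsHermitian) {b : ℝ} (hb : ∀ r ∈ spectrum ℝ A, r ≤ b) (x : n → ℝ) :
    x ⬝ᵥ A *ᵥ x ≤ b * (x ⬝ᵥ x) := by
  have hpsd : (algebraMap ℝ (Matrix n n ℝ) b - A).PosSemidef := by
    refine posSemidef_iff_isHermitian_and_spectrum_nonneg.mpr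
      ⟨(isHermitian_diagonal _).sub hA, ?_⟩
    rw [← spectrum.singleton_sub_eq]
    rintro _ ⟨_, rfl, r, hr, rfl⟩
    exact sub_nonneg.mpr (hb r hr)
  simpa [sub_mulVec, Algebra.algebraMap_eq_smul_one, smul_mulVec, sub_nonneg]
    using hpsd.dotProduct_mulVec_nonneg x

theorem IsHermitian.spectrum_subset_Icc_iff {A : Matrix n n ℝ} (hA : A.IsHermitian)
    {a b : ℝ} : spectrum ℝ A ⊆ Set.Icc a b ↔
      ∀ x, a * (x ⬝ᵥ x) ≤ x ⬝ᵥ A *ᵥ x ∧ x ⬝ᵥ A *ᵥ x ≤ b * (x ⬝ᵥ x) := by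
  refine ⟨fun h x => ⟨hA.mul_dotProduct_self_le_dotProduct_mulVec (fun r hr => (h hr).1) x,
    hA.dotProduct_mulVec_le_mul_dotProduct_self (fun r hr => (h hr).2) x⟩, fun h r hr => ?_⟩
  rw [← setOf_mulVec_eq_smul_eq_spectrum] at hr
  obtain ⟨v, hv, hAv⟩ := hr
  have hvv : 0 < v ⬝ᵥ v := by simpa using dotProduct_star_self_pos_iff.mpr hv
  obtain ⟨hlow, hupp⟩ := h v
  rw [hAv, dotProduct_smul, smul_eq_mul] at hlow hupp
  exact ⟨le_of_mul_le_mul_right hlow hvv, le_of_mul_le_mul_right hupp hvv⟩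

theorem IsHermitian.spectrum_transpose_mul_mul_subset_Icc {A : Matrix m m ℝ}
    (hA : A.IsHermitian) {U : Matrix m n ℝ} (hU : Uᵀ * U = 1) :
    spectrum ℝ (Uᵀ * A * U) ⊆ Set.Icc (lambdaMin A) (lambdaMax A) := by
  have hUA : (Uᵀ * A * U).IsHermitian := by
    simpa using isHermitian_conjTranspose_mul_mul U hA
  refine hUA.spectrum_subset_Icc_iff.mpr fun y => ?_
  have hnorm : (U *ᵥ y) ⬝ᵥ (U *ᵥ y) = y ⬝ᵥ y := by
    rw [mulVec_dotProduct_mulVec, hU, one_mulVec]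
  rw [dotProduct_transpose_mul_mul_mulVec, ← hnorm]
  exact hA.spectrum_subset_Icc_iff.mp (spectrum_subset_Icc_lambdaMin_lambdaMax A) _

theorem spectrum_inv_subset_Icc {B : Matrix n n ℝ} (hB : IsUnit B) {a b : ℝ} (ha : 0 < a)
    (h : spectrum ℝ B ⊆ Set.Icc a b) : spectrum ℝ B⁻¹ ⊆ Set.Icc b⁻¹ a⁻¹ := by
  obtain ⟨u, rfl⟩ := hB
  rw [← coe_units_inv, ← spectrum.map_inv]
  intro r hr
  obtain ⟨hlow, hupp⟩ := h (Set.mem_inv.mp hr)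
  have hr : 0 < r := inv_pos.mp (ha.trans_le hlow)
  exact ⟨inv_le_of_inv_le₀ hr hupp, le_inv_of_le_inv₀ ha hlow⟩

theorem PosDef.lambdaMin_pos [Nonempty n] {A : Matrix n n ℝ} (hA : A.PosDef) :
    0 < lambdaMin A := by
  have hmem : lambdaMin A ∈ spectrum ℝ A := by
    rw [lambdaMin, setOf_mulVec_eq_smul_eq_spectrum]
    refine Set.Nonempty.csInf_mem ?_ A.finite_spectrum
    rw [hA.1.spectrum_real_eq_range_eigenvalues]
    exact Set.range_nonempty _
  rw [hA.1.spectrum_real_eq_range_eigenvalues] at hmem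
  obtain ⟨i, hi⟩ := hmem
  exact hi ▸ hA.eigenvalues_pos i

theorem PosDef.dotProduct_inv_transpose_mul_mul_mulVec_mem_Icc [Nonempty m]
    {A : Matrix m m ℝ} (hA : A.PosDef) {U : Matrix m n ℝ} (hU : Uᵀ * U = 1) (x : n → ℝ) :
    x ⬝ᵥ (Uᵀ * A * U)⁻¹ *ᵥ x ∈
      Set.Icc ((lambdaMax A)⁻¹ * (x ⬝ᵥ x)) ((lambdaMin A)⁻¹ * (x ⬝ᵥ x)) := by
  have hUinj : Function.Injective U.mulVec := fun y z hyz => by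
    simpa [mulVec_mulVec, hU] using congrArg (Uᵀ *ᵥ ·) hyz
  have hB : (Uᵀ * A * U).PosDef := by simpa using hA.conjTranspose_mul_mul_same hUinj
  refine hB.1.inv.spectrum_subset_Icc_iff.mp ?_ x
  exact spectrum_inv_subset_Icc hB.isUnit hA.lambdaMin_pos
    (hA.1.spectrum_transpose_mul_mul_subset_Icc hU)

end Spectrum

end Matrix

theorem vnorm_sq {k : Type*} [Fintype k] (v : k → ℝ) : vnorm v ^ 2 = v ⬝ᵥ v :=
  Real.sq_sqrt (by simpa using dotProduct_star_self_nonneg v)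

theorem vnorm_smul_sq {k : Type*} [Fintype k] (c : ℝ) (v : k → ℝ) :
    vnorm (c • v) ^ 2 = c ^ 2 * (v ⬝ᵥ v) := by
  rw [vnorm_sq, smul_dotProduct, dotProduct_smul, smul_eq_mul, smul_eq_mul, ← mul_assoc, sq]

theorem mul_div_mem_Icc_of_mem_Icc {a b c x q : ℝ} (ha : 0 < a) (hc : c ∈ Set.Icc a b)
    (hx : 0 ≤ x) (hq : q ∈ Set.Icc (b⁻¹ * x) (a⁻¹ * x)) :
    q ∈ Set.Icc (a / b * (x / c)) (b / a * (x / c)) := by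
  have hc0 : 0 < c := ha.trans_le hc.1
  constructor
  · calc a / b * (x / c) = a / c * (b⁻¹ * x) := by ring
      _ ≤ 1 * (b⁻¹ * x) :=
        mul_le_mul_of_nonneg_right (div_le_one_of_le₀ hc.1 hc0.le)
          (mul_nonneg (inv_nonneg.mpr (hc0.le.trans hc.2)) hx)
      _ ≤ q := by rw [one_mul]; exact hq.1
  · calc q ≤ 1 * (a⁻¹ * x) := by rw [one_mul]; exact hq.2
      _ ≤ b / c * (a⁻¹ * x) :=
        mul_le_mul_of_nonneg_right ((one_le_div₀ hc0).mpr hc.2)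
          (mul_nonneg (inv_nonneg.mpr ha.le) hx)
      _ = b / a * (x / c) := by ring

theorem sandwich_bound_quadratic_form_general {p n : ℕ}
    (S Ssqrt : Matrix (Fin p) (Fin p) ℝ) (hPD : S.PosDef)
    (hsq : Ssqrt * Ssqrt = S) (hsqSymm : Ssqrtᵀ = Ssqrt)
    (U : Matrix (Fin p) (Fin n) ℝ) (hU : Uᵀ * U = 1)
    (v : Fin p → ℝ) (hv : vnorm v = 1) :
    (lambdaMin S / lambdaMax S) *
        vnorm (Uᵀ.mulVec ((vnorm (Ssqrt.mulVec v))⁻¹ • Ssqrt.mulVec v)) ^ 2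
      ≤ v ⬝ᵥ (Ssqrt * U * (Uᵀ * S * U)⁻¹ * Uᵀ * Ssqrt).mulVec v ∧
    v ⬝ᵥ (Ssqrt * U * (Uᵀ * S * U)⁻¹ * Uᵀ * Ssqrt).mulVec v
      ≤ (lambdaMax S / lambdaMin S) *
          vnorm (Uᵀ.mulVec ((vnorm (Ssqrt.mulVec v))⁻¹ • Ssqrt.mulVec v)) ^ 2 := by
  have : Nonempty (Fin p) := by
    by_contra h
    simp [not_nonempty_iff.mp h, vnorm] at hv
  set s := Ssqrt *ᵥ v
  set u := Uᵀ *ᵥ s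
  have hs : s ⬝ᵥ s ∈ Set.Icc (lambdaMin S) (lambdaMax S) := by
    rw [mulVec_dotProduct_mulVec, hsqSymm, hsq]
    simpa [← vnorm_sq, hv] using
      hPD.1.spectrum_subset_Icc_iff.mp (spectrum_subset_Icc_lambdaMin_lambdaMax S) v
  have hQ : v ⬝ᵥ (Ssqrt * U * (Uᵀ * S * U)⁻¹ * Uᵀ * Ssqrt) *ᵥ v =
      u ⬝ᵥ (Uᵀ * S * U)⁻¹ *ᵥ u := by
    have : Ssqrt * U * (Uᵀ * S * U)⁻¹ * Uᵀ * Ssqrt =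
        (Uᵀ * Ssqrt)ᵀ * (Uᵀ * S * U)⁻¹ * (Uᵀ * Ssqrt) := by
      rw [transpose_mul, transpose_transpose, hsqSymm]
      simp only [Matrix.mul_assoc]
    rw [this, dotProduct_transpose_mul_mul_mulVec, ← mulVec_mulVec]
  have hw : vnorm (Uᵀ *ᵥ ((vnorm s)⁻¹ • s)) ^ 2 = (u ⬝ᵥ u) / (s ⬝ᵥ s) := by
    rw [mulVec_smul, vnorm_smul_sq, inv_pow, vnorm_sq, inv_mul_eq_div]
  rw [hQ, hw]
  exact mul_div_mem_Icc_of_mem_Icc hPD.lambdaMin_pos hs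
    (by simpa using dotProduct_star_self_nonneg u)
    (hPD.dotProduct_inv_transpose_mul_mul_mulVec_mem_Icc hU u)

/-- **Deterministic sandwich bound from the proof of Lemma diag.** -/
theorem sandwich_bound_quadratic_form {p n : ℕ} (hnp : n ≤ p)
    (S Ssqrt : Matrix (Fin p) (Fin p) ℝ) (hPD : S.PosDef)
    (hsq : Ssqrt * Ssqrt = S) (hsqSymm : Ssqrtᵀ = Ssqrt) (hsqPD : Ssqrt.PosDef)
    (U : Matrix (Fin p) (Fin n) ℝ) (hU : Uᵀ * U = 1)
    (v : Fin p → ℝ) (hv : vnorm v = 1) :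
    (lambdaMin S / lambdaMax S) *
        vnorm (Uᵀ.mulVec ((vnorm (Ssqrt.mulVec v))⁻¹ • Ssqrt.mulVec v)) ^ 2
      ≤ v ⬝ᵥ (Ssqrt * U * (Uᵀ * S * U)⁻¹ * Uᵀ * Ssqrt).mulVec v ∧
    v ⬝ᵥ (Ssqrt * U * (Uᵀ * S * U)⁻¹ * Uᵀ * Ssqrt).mulVec v
      ≤ (lambdaMax S / lambdaMin S) *
          vnorm (Uᵀ.mulVec ((vnorm (Ssqrt.mulVec v))⁻¹ • Ssqrt.mulVec v)) ^ 2 :=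
  sandwich_bound_quadratic_form_general S Ssqrt hPD hsq hsqSymm U hU v hv
end
end
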